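/- arXiv:2405.07427 — 6 statements merged into one kernel-verified Lean document; each statement's English description precedes it below -/
import Mathlib

section
/- Let γ ∈ (1,2) and let j be a natural number. Then (1/(2π)) ∫₀^{2π} cos(jη) · (sin(η/2))^{2−γ} dη = (−1)^j · Γ(3−γ) / (2^{2−γ} · Γ(2 + j − γ/2) · Γ(2 − j − γ/2)). -/
open Real MeasureTheory Set

/-! With `s = 2 - γ ∈ (0, 1)` and `η = 2θ`, the left side is `I_j / π`, where
`I_j = ∫₀^π cos (2jθ) sin^s θ dθ`. The derivative of `cos ((2j+1)θ) sin^(s+1) θ`, a function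
vanishing at `0` and `π`, is a combination of the integrands of `I_{j+1}` and `I_j`, which gives
`(s + 2j + 2) I_{j+1} = (2j - s) I_j`; by `Γ(x + 1) = x Γ(x)` the right-hand sides satisfy the same
recursion. The base case is a Beta integral: `x = sin² (θ/2)` turns `I_0` into
`2^s B((s+1)/2, (s+1)/2)`, and Legendre's duplication formula brings this to the required form. -/

lemma ofReal_rpow_mul_one_sub_rpow {a b x : ℝ} (hx : x ∈ Icc (0 : ℝ) 1) :
    ((x ^ (a - 1) * (1 - x) ^ (b - 1) : ℝ) : ℂ) =
      (x : ℂ) ^ ((a : ℂ) - 1) * (1 - (x : ℂ)) ^ ((b : ℂ) - 1) := by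
  have h1x : 0 ≤ 1 - x := sub_nonneg.mpr hx.2
  rw [Complex.ofReal_mul, Complex.ofReal_cpow hx.1, Complex.ofReal_cpow h1x]
  push_cast
  rfl

theorem intervalIntegrable_rpow_mul_one_sub_rpow {a b : ℝ} (ha : 0 < a) (hb : 0 < b) :
    IntervalIntegrable (fun x : ℝ => x ^ (a - 1) * (1 - x) ^ (b - 1)) volume 0 1 := by
  have h := (Complex.betaIntegral_convergent (u := a) (v := b) (by simpa) (by simpa))
  rw [intervalIntegrable_iff_integrableOn_Icc_of_le zero_le_one] at h ⊢
  refine IntegrableOn.congr_fun h.re (fun x hx => ?_) measurableSet_Icc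
  simp only [← ofReal_rpow_mul_one_sub_rpow hx, RCLike.re_to_complex, Complex.ofReal_re]

theorem integral_rpow_mul_one_sub_rpow {a b : ℝ} (ha : 0 < a) (hb : 0 < b) :
    ∫ x in (0 : ℝ)..1, x ^ (a - 1) * (1 - x) ^ (b - 1) = Gamma a * Gamma b / Gamma (a + b) := by
  have hbeta := Complex.Gamma_mul_Gamma_eq_betaIntegral (s := a) (t := b) (by simpa) (by simpa)
  have hint : Complex.betaIntegral a b =
      ((∫ x in (0 : ℝ)..1, x ^ (a - 1) * (1 - x) ^ (b - 1) : ℝ) : ℂ) := by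
    rw [Complex.betaIntegral, ← intervalIntegral.integral_ofReal]
    refine intervalIntegral.integral_congr fun x hx => ?_
    rw [uIcc_of_le zero_le_one] at hx
    exact (ofReal_rpow_mul_one_sub_rpow hx).symm
  rw [hint, ← Complex.ofReal_add, Complex.Gamma_ofReal, Complex.Gamma_ofReal,
    Complex.Gamma_ofReal, ← Complex.ofReal_mul, ← Complex.ofReal_mul, Complex.ofReal_inj] at hbeta
  rw [eq_div_iff (Gamma_pos_of_pos (add_pos ha hb)).ne', mul_comm, hbeta]

lemma sin_rpow_eq_two_rpow_mul {s θ : ℝ} (hs : s ≠ 0) (hθ : θ ∈ Icc 0 π) :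
    sin θ ^ s = 2 ^ s * ((sin (θ / 2) ^ 2) ^ ((s + 1) / 2 - 1) *
      (1 - sin (θ / 2) ^ 2) ^ ((s + 1) / 2 - 1) * (sin (θ / 2) * cos (θ / 2))) := by
  have ht : 0 ≤ sin (θ / 2) :=
    sin_nonneg_of_nonneg_of_le_pi (by linarith [hθ.1]) (by linarith [hθ.2, pi_pos])
  have hc : 0 ≤ cos (θ / 2) :=
    cos_nonneg_of_mem_Icc ⟨by linarith [hθ.1, pi_pos], by linarith [hθ.2]⟩
  have htc := mul_nonneg ht hc
  rw [← cos_sq', ← mul_rpow (sq_nonneg _) (sq_nonneg _), ← mul_pow, ← rpow_natCast,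
    ← rpow_mul htc, ← rpow_add_one' htc (by ring_nf; exact hs),
    show ((2 : ℕ) : ℝ) * ((s + 1) / 2 - 1) + 1 = s by push_cast; ring,
    ← mul_rpow zero_le_two htc, ← mul_assoc, ← sin_two_mul, mul_div_cancel₀ _ two_ne_zero]

theorem integral_cos_add_two_mul_mul_sin_rpow {s : ℝ} (hs : 0 < s) (c : ℝ) :
    (s + c + 2) * ∫ θ in (0 : ℝ)..π, cos ((c + 2) * θ) * sin θ ^ s =
      (c - s) * ∫ θ in (0 : ℝ)..π, cos (c * θ) * sin θ ^ s := by
  have hint : ∀ d : ℝ, IntervalIntegrable (fun θ => cos (d * θ) * sin θ ^ s) volume 0 π :=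
    fun d => ((continuous_cos.comp (continuous_const_mul d)).mul
      (continuous_sin.rpow_const fun _ => Or.inr hs.le)).intervalIntegrable 0 π
  have hderiv : ∀ θ ∈ uIcc 0 π, HasDerivAt (fun θ => cos ((c + 1) * θ) * sin θ ^ (s + 1))
      ((s + c + 2) / 2 * (cos ((c + 2) * θ) * sin θ ^ s) +
        (s - c) / 2 * (cos (c * θ) * sin θ ^ s)) θ := by
    intro θ hθ
    rw [uIcc_of_le pi_pos.le] at hθ
    have hsin := sin_nonneg_of_nonneg_of_le_pi hθ.1 hθ.2
    have h := (((hasDerivAt_id' θ).const_mul (c + 1)).cos).mul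
      ((hasDerivAt_sin θ).rpow_const (p := s + 1) (Or.inr (by linarith)))
    refine h.congr_deriv ?_
    rw [add_sub_cancel_right, rpow_add_one' hsin (by linarith),
      show (c + 2) * θ = (c + 1) * θ + θ by ring, show c * θ = (c + 1) * θ - θ by ring,
      cos_add, cos_sub]
    ring
  have hFTC := intervalIntegral.integral_eq_sub_of_hasDerivAt hderiv
    (((hint _).const_mul _).add ((hint _).const_mul _))
  rw [intervalIntegral.integral_add ((hint _).const_mul _) ((hint _).const_mul _),
    intervalIntegral.integral_const_mul, intervalIntegral.integral_const_mul] at hFTC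
  simp only [sin_zero, sin_pi, zero_rpow (by linarith : s + 1 ≠ 0), mul_zero, sub_zero] at hFTC
  linarith

theorem integral_sin_rpow {s : ℝ} (hs : 0 < s) :
    ∫ θ in (0 : ℝ)..π, sin θ ^ s = 2 ^ s * Gamma ((s + 1) / 2) ^ 2 / Gamma (s + 1) := by
  set a := (s + 1) / 2
  have ha : 0 < a := by positivity
  set g : ℝ → ℝ := fun x => x ^ (a - 1) * (1 - x) ^ (a - 1)
  set f : ℝ → ℝ := fun θ => sin (θ / 2) ^ 2
  have hf_mem : ∀ θ ∈ Ioo 0 π, f θ ∈ Ioo 0 1 := fun θ hθ => by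
    have ht := sin_pos_of_pos_of_lt_pi (x := θ / 2) (by linarith [hθ.1])
      (by linarith [hθ.2, pi_pos])
    have hc := cos_pos_of_mem_Ioo (x := θ / 2) ⟨by linarith [hθ.1, pi_pos], by linarith [hθ.2]⟩
    exact ⟨by positivity, by nlinarith [sin_sq_add_cos_sq (θ / 2)]⟩
  have hsub : ∫ θ in (0 : ℝ)..π, (g ∘ f) θ * (sin (θ / 2) * cos (θ / 2)) =
      ∫ x in (0 : ℝ)..1, g x := by
    rw [intervalIntegral.integral_comp_mul_deriv''' (f' := fun θ => sin (θ / 2) * cos (θ / 2))]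
    · simp [f]
    · fun_prop
    · exact fun θ _ => (((hasDerivAt_id' θ).div_const 2).sin.pow 2).hasDerivWithinAt.congr_deriv
        (by norm_num; ring)
    · rintro _ ⟨θ, hθ, rfl⟩
      rw [min_eq_left pi_pos.le, max_eq_right pi_pos.le] at hθ
      obtain ⟨h0, h1⟩ := hf_mem θ hθ
      refine ContinuousAt.continuousWithinAt ?_
      exact (continuousAt_id.rpow_const (Or.inl h0.ne')).mul
        ((continuousAt_const.sub continuousAt_id).rpow_const (Or.inl (sub_pos.mpr h1).ne'))
    · refine ((intervalIntegrable_iff_integrableOn_Icc_of_le zero_le_one).mp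
        (intervalIntegrable_rpow_mul_one_sub_rpow ha ha)).mono_set ?_
      rintro _ ⟨θ, -, rfl⟩
      exact ⟨sq_nonneg _, sin_sq_le_one _⟩
    · rw [uIcc_of_le pi_pos.le]
      refine IntegrableOn.congr_fun (f := fun θ => sin θ ^ s / 2 ^ s) ?_ (fun θ hθ => ?_)
        measurableSet_Icc
      · exact ((continuous_sin.rpow_const fun _ => Or.inr hs.le).div_const _).integrableOn_Icc
      · dsimp only
        rw [sin_rpow_eq_two_rpow_mul hs.ne' hθ, mul_div_cancel_left₀ _ (by positivity)]
        rfl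
  calc ∫ θ in (0 : ℝ)..π, sin θ ^ s
      = ∫ θ in (0 : ℝ)..π, 2 ^ s * ((g ∘ f) θ * (sin (θ / 2) * cos (θ / 2))) := by
        refine intervalIntegral.integral_congr fun θ hθ => ?_
        rw [uIcc_of_le pi_pos.le] at hθ
        exact sin_rpow_eq_two_rpow_mul hs.ne' hθ
    _ = 2 ^ s * Gamma ((s + 1) / 2) ^ 2 / Gamma (s + 1) := by
        rw [intervalIntegral.integral_const_mul, hsub, integral_rpow_mul_one_sub_rpow ha ha,
          show a + a = s + 1 by ring]
        ring

lemma Gamma_one_add_sub_natCast_ne_zero {x : ℝ} (hx : 0 < x) (hxn : ∀ n : ℕ, x ≠ n) (j : ℕ) :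
    Gamma (1 + x - j) ≠ 0 := by
  refine Gamma_ne_zero fun m hm => ?_
  rcases lt_or_ge j (m + 1) with hj | hj
  · have : (j : ℝ) < m + 1 := by exact_mod_cast hj
    linarith
  · exact hxn (j - (m + 1)) (by push_cast [hj]; linarith)

theorem integral_cos_two_nat_mul_mul_sin_rpow {s : ℝ} (hs : 0 < s) (hs2 : ∀ n : ℕ, s / 2 ≠ n)
    (j : ℕ) :
    ∫ θ in (0 : ℝ)..π, cos (2 * j * θ) * sin θ ^ s =
      (-1) ^ j * π * Gamma (s + 1) / (2 ^ s * Gamma (1 + s / 2 + j) * Gamma (1 + s / 2 - j)) := by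
  induction j with
  | zero =>
    have hdup := Gamma_mul_Gamma_add_half_of_pos (s := (s + 1) / 2) (by positivity)
    rw [show (s + 1) / 2 + 1 / 2 = 1 + s / 2 by ring, show 2 * ((s + 1) / 2) = s + 1 by ring,
      show 1 - (s + 1) = -s by ring, rpow_neg zero_le_two] at hdup
    have hdup' : 2 ^ s * (Gamma ((s + 1) / 2) * Gamma (1 + s / 2)) = Gamma (s + 1) * √π := by
      rw [hdup]; field_simp
    simp only [CharP.cast_eq_zero, mul_zero, zero_mul, cos_zero, one_mul, pow_zero, add_zero,
      sub_zero, integral_sin_rpow hs]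
    rw [div_eq_div_iff (Gamma_pos_of_pos (by linarith)).ne' (by positivity)]
    linear_combination (2 ^ s * Gamma ((s + 1) / 2) * Gamma (1 + s / 2) + Gamma (s + 1) * √π) *
      hdup' + Gamma (s + 1) ^ 2 * sq_sqrt pi_pos.le
  | succ j ih =>
    have hrec := integral_cos_add_two_mul_mul_sin_rpow hs (2 * j)
    have hsj : s / 2 - j ≠ 0 := sub_ne_zero.mpr (hs2 j)
    have hsj' : s - 2 * j ≠ 0 := fun h => hsj (by linarith)
    have hGp : Gamma (1 + s / 2 + ↑(j + 1)) = (1 + s / 2 + j) * Gamma (1 + s / 2 + j) := by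
      rw [Nat.cast_succ, ← add_assoc, Gamma_add_one (by positivity)]
    have hGm : Gamma (1 + s / 2 - j) = (s / 2 - j) * Gamma (1 + s / 2 - ↑(j + 1)) := by
      rw [show 1 + s / 2 - (j : ℝ) = s / 2 - j + 1 by ring, Gamma_add_one hsj]
      push_cast; ring_nf
    have hΓp : Gamma (1 + s / 2 + j) ≠ 0 := (Gamma_pos_of_pos (by positivity)).ne'
    have hΓm := Gamma_one_add_sub_natCast_ne_zero (by positivity) hs2 (j + 1)
    rw [ih, hGm, show 2 * (j : ℝ) + 2 = 2 * ↑(j + 1) by push_cast; ring] at hrec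
    rw [hGp, pow_succ]
    generalize Gamma (1 + s / 2 + j) = A at *
    generalize Gamma (1 + s / 2 - ↑(j + 1)) = B at *
    generalize ∫ θ in (0 : ℝ)..π, cos (2 * ↑(j + 1) * θ) * sin θ ^ s = I at *
    have hden : s + 2 * j + 2 ≠ 0 := by positivity
    field_simp at hrec ⊢
    apply mul_left_cancel₀ hsj'
    linear_combination hrec

/-- For `γ ∈ (1,2)` and `j : ℕ`,
`(1/(2π)) ∫₀^{2π} cos(jη)·(sin(η/2))^{2−γ} dη
  = (−1)^j·Γ(3−γ)/(2^{2−γ}·Γ(2+j−γ/2)·Γ(2−j−γ/2))`. -/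
theorem integral_cos_mul_sin_rpow (γ : ℝ) (h1 : 1 < γ) (h2 : γ < 2) (j : ℕ) :
    (1 / (2 * Real.pi)) *
        ∫ η in (0 : ℝ)..(2 * Real.pi),
          Real.cos (j * η) * Real.sin (η / 2) ^ (2 - γ) =
      (-1 : ℝ) ^ j * Real.Gamma (3 - γ) /
        ((2 : ℝ) ^ (2 - γ) * Real.Gamma (2 + j - γ / 2) *
          Real.Gamma (2 - j - γ / 2)) := by
  have hs : 0 < 2 - γ := by linarith
  have hs2 : ∀ n : ℕ, (2 - γ) / 2 ≠ n := fun n hn => by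
    rcases n with _ | n
    · rw [Nat.cast_zero] at hn
      linarith
    · rw [Nat.cast_succ] at hn
      linarith [n.cast_nonneg (α := ℝ)]
  have hhalf : ∫ η in (0 : ℝ)..(2 * π), cos (j * η) * sin (η / 2) ^ (2 - γ) =
      2 * ∫ θ in (0 : ℝ)..π, cos (2 * j * θ) * sin θ ^ (2 - γ) := by
    have h := intervalIntegral.integral_comp_div (fun θ => cos (2 * j * θ) * sin θ ^ (2 - γ))
      (a := 0) (b := 2 * π) two_ne_zero
    rw [zero_div, mul_div_cancel_left₀ _ two_ne_zero, smul_eq_mul] at h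
    rw [← h]
    congr! 4 with η
    ring
  rw [hhalf, integral_cos_two_nat_mul_mul_sin_rpow hs hs2, show 3 - γ = 2 - γ + 1 by ring,
    show 2 + j - γ / 2 = 1 + (2 - γ) / 2 + j by ring,
    show 2 - j - γ / 2 = 1 + (2 - γ) / 2 - j by ring]
  field_simp
end

section
/- Let γ ∈ (1,2), let j ≥ 1 be an integer and let β ∈ ℝ. Then (1/(2π)) ∫₀^{2π} sin(j(β−η)) · cos(η/2) · (sin(η/2))^{1−γ} dη = (2j/(2−γ)) · cos(jβ) · (1/(2π)) ∫₀^{2π} cos(jη) · (sin(η/2))^{2−γ} dη. -/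
/-!
Expanding `sin (j (β - η)) = sin (j β) cos (j η) - cos (j β) sin (j η)` splits the integral in
two. The `cos (j η)` part vanishes because its integrand is odd under `η ↦ 2π - η`. In the
`sin (j η)` part, `cos (η/2) sin (η/2) ^ (1 - γ)` is `2 / (2 - γ)` times the derivative of
`sin (η/2) ^ (2 - γ)`, and integrating by parts against `sin (j η)`, which vanishes at `0` and
`2π`, produces the `cos (j η)` integral. All integrals converge since by Jordan's inequality
`sin (η/2)` is at least `min η (2π - η) / π`, and `γ < 2`.
-/

open Real MeasureTheory Set

lemma sin_half_pos {η : ℝ} (hη : η ∈ Ioo 0 (2 * π)) : 0 < sin (η / 2) :=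
  sin_pos_of_pos_of_lt_pi (by linarith [hη.1]) (by linarith [hη.2])

lemma div_pi_le_sin_half {η : ℝ} (h0 : 0 ≤ η) (hπ : η ≤ π) : η / π ≤ sin (η / 2) := by
  calc η / π = 2 / π * (η / 2) := by field_simp
    _ ≤ sin (η / 2) := mul_le_sin (by linarith) (by linarith)

lemma sin_half_rpow_le {s : ℝ} (hs : s ≤ 0) {η : ℝ} (h0 : 0 < η) (hπ : η ≤ π) :
    sin (η / 2) ^ s ≤ π ^ (-s) * η ^ s := by
  calc sin (η / 2) ^ s ≤ (η / π) ^ s :=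
        rpow_le_rpow_of_nonpos (by positivity) (div_pi_le_sin_half h0.le hπ) hs
    _ = π ^ (-s) * η ^ s := by
        rw [div_rpow h0.le pi_pos.le, rpow_neg pi_pos.le, div_eq_inv_mul]

lemma intervalIntegrable_sin_half_rpow {s : ℝ} (hs : -1 < s) :
    IntervalIntegrable (fun η => sin (η / 2) ^ s) volume 0 (2 * π) := by
  have hsin : Continuous fun η : ℝ => sin (η / 2) := by fun_prop
  rcases le_or_gt 0 s with hs0 | hs0
  · exact (hsin.rpow_const fun _ => Or.inr hs0).intervalIntegrable _ _
  have hbound : IntervalIntegrable (fun η => π ^ (-s) * (η ^ s + (2 * π - η) ^ s))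
      volume 0 (2 * π) := by
    refine (intervalIntegral.intervalIntegrable_rpow' hs).add ?_ |>.const_mul _
    simpa using ((intervalIntegral.intervalIntegrable_rpow' (a := 0) (b := 2 * π) hs).comp_sub_left
      (2 * π)).symm
  rw [intervalIntegrable_iff_integrableOn_Ioo_of_le (by positivity)] at hbound ⊢
  refine hbound.mono' ?_ (ae_restrict_of_forall_mem measurableSet_Ioo fun η hη => ?_)
  · exact (hsin.continuousOn.rpow_const fun η hη => Or.inl (sin_half_pos hη).ne'
      ).aestronglyMeasurable measurableSet_Ioo
  rw [Real.norm_of_nonneg (rpow_nonneg (sin_half_pos hη).le _)]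
  obtain ⟨h0, h2π⟩ := hη
  have hη := rpow_nonneg h0.le s
  have hη' := rpow_nonneg (by linarith : 0 ≤ 2 * π - η) s
  have hπs := rpow_nonneg pi_pos.le (-s)
  rcases le_or_gt η π with hle | hgt
  · nlinarith [sin_half_rpow_le hs0.le h0 hle]
  · have hsymm : sin (η / 2) = sin ((2 * π - η) / 2) := by
      rw [show (2 * π - η) / 2 = π - η / 2 by ring, sin_pi_sub]
    rw [hsymm]
    nlinarith [sin_half_rpow_le hs0.le (by linarith : 0 < 2 * π - η) (by linarith)]

lemma intervalIntegral.integral_eq_zero_of_apply_add_sub_eq_neg {f : ℝ → ℝ} {a b : ℝ}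
    (hf : ∀ x, f (a + b - x) = -f x) : ∫ x in a..b, f x = 0 := by
  have h := intervalIntegral.integral_comp_sub_left (a := a) (b := b) f (a + b)
  simp only [hf, intervalIntegral.integral_neg, add_sub_cancel_right, add_sub_cancel_left] at h
  linarith

lemma integral_cos_mul_cos_half_mul_sin_half_rpow_eq_zero (j : ℕ) (s : ℝ) :
    ∫ η in (0 : ℝ)..2 * π, cos (j * η) * cos (η / 2) * sin (η / 2) ^ s = 0 := by
  refine intervalIntegral.integral_eq_zero_of_apply_add_sub_eq_neg fun η => ?_
  rw [zero_add, mul_sub, cos_nat_mul_two_pi_sub, show (2 * π - η) / 2 = π - η / 2 by ring,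
    cos_pi_sub, sin_pi_sub]
  ring

lemma integral_sin_mul_cos_half_mul_sin_half_rpow (j : ℕ) {t : ℝ} (ht : 0 < t) :
    ∫ η in (0 : ℝ)..2 * π, sin (j * η) * cos (η / 2) * sin (η / 2) ^ (t - 1) =
      -(2 * j / t) * ∫ η in (0 : ℝ)..2 * π, cos (j * η) * sin (η / 2) ^ t := by
  have hu : Continuous fun η : ℝ => sin (η / 2) ^ t :=
    (by fun_prop : Continuous fun η : ℝ => sin (η / 2)).rpow_const fun _ => Or.inr ht.le
  have hu' : ∀ η ∈ Ioo (min 0 (2 * π)) (max 0 (2 * π)), HasDerivWithinAt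
      (fun η => sin (η / 2) ^ t) (t / 2 * (cos (η / 2) * sin (η / 2) ^ (t - 1))) (Ioi η) η := by
    intro η hη
    rw [min_eq_left (by positivity), max_eq_right (by positivity)] at hη
    exact (((hasDerivAt_id' η).div_const 2).sin.rpow_const (p := t)
      (Or.inl (sin_half_pos hη).ne')).hasDerivWithinAt.congr_deriv (by ring)
  have hv' : ∀ η ∈ Ioo (min 0 (2 * π)) (max 0 (2 * π)), HasDerivWithinAt
      (fun η : ℝ => sin (j * η)) (j * cos (j * η)) (Ioi η) η := fun η _ =>
    (((hasDerivAt_id' η).const_mul (j : ℝ)).sin).hasDerivWithinAt.congr_deriv (by ring)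
  have hibp := intervalIntegral.integral_mul_deriv_eq_deriv_mul_of_hasDeriv_right hu.continuousOn
    (by fun_prop) hu' hv'
    (((intervalIntegrable_sin_half_rpow (by linarith : -1 < t - 1)).continuousOn_mul
      (by fun_prop : Continuous fun η : ℝ => cos (η / 2)).continuousOn).const_mul _)
    ((by fun_prop : Continuous fun η : ℝ => (j : ℝ) * cos (j * η)).intervalIntegrable _ _)
  have hlhs : ∫ η in (0 : ℝ)..2 * π, sin (η / 2) ^ t * (j * cos (j * η)) =
      j * ∫ η in (0 : ℝ)..2 * π, cos (j * η) * sin (η / 2) ^ t := by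
    rw [← intervalIntegral.integral_const_mul]
    congr 1 with η
    ring
  have hrhs : ∫ η in (0 : ℝ)..2 * π, t / 2 * (cos (η / 2) * sin (η / 2) ^ (t - 1)) * sin (j * η) =
      t / 2 * ∫ η in (0 : ℝ)..2 * π, sin (j * η) * cos (η / 2) * sin (η / 2) ^ (t - 1) := by
    rw [← intervalIntegral.integral_const_mul]
    congr 1 with η
    ring
  rw [hlhs, hrhs, show 2 * π / 2 = π by ring, sin_pi, zero_rpow ht.ne', zero_mul, mul_zero,
    sin_zero, mul_zero, sub_zero, zero_sub] at hibp
  field_simp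
  linarith

theorem integral_sin_shift_cos_half_general (γ : ℝ) (h2 : γ < 2)
    (j : ℕ) (β : ℝ) :
    (1 / (2 * Real.pi)) *
        ∫ η in (0 : ℝ)..(2 * Real.pi),
          Real.sin (j * (β - η)) * Real.cos (η / 2) * Real.sin (η / 2) ^ (1 - γ) =
      (2 * j / (2 - γ)) * Real.cos (j * β) *
        ((1 / (2 * Real.pi)) *
          ∫ η in (0 : ℝ)..(2 * Real.pi),
            Real.cos (j * η) * Real.sin (η / 2) ^ (2 - γ)) := by
  have hint : ∀ b : ℝ → ℝ, Continuous b →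
      IntervalIntegrable (fun η => b η * sin (η / 2) ^ (1 - γ)) volume 0 (2 * π) :=
    fun b hb => (intervalIntegrable_sin_half_rpow (by linarith)).continuousOn_mul hb.continuousOn
  have hsplit : ∫ η in (0 : ℝ)..2 * π, sin (j * (β - η)) * cos (η / 2) * sin (η / 2) ^ (1 - γ) =
      sin (j * β) * (∫ η in (0 : ℝ)..2 * π, cos (j * η) * cos (η / 2) * sin (η / 2) ^ (1 - γ)) -
        cos (j * β) * ∫ η in (0 : ℝ)..2 * π, sin (j * η) * cos (η / 2) * sin (η / 2) ^ (1 - γ) := by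
    rw [← intervalIntegral.integral_const_mul, ← intervalIntegral.integral_const_mul,
      ← intervalIntegral.integral_sub ((hint _ (by fun_prop)).const_mul _)
        ((hint _ (by fun_prop)).const_mul _)]
    congr 1 with η
    rw [mul_sub, sin_sub]
    ring
  have hibp := integral_sin_mul_cos_half_mul_sin_half_rpow j (t := 2 - γ) (by linarith)
  rw [show 2 - γ - 1 = 1 - γ by ring] at hibp
  rw [hsplit, integral_cos_mul_cos_half_mul_sin_half_rpow_eq_zero, hibp]
  ring

/-- For `γ ∈ (1,2)`, an integer `j ≥ 1` and `β ∈ ℝ`,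
`(1/(2π)) ∫₀^{2π} sin(j(β−η))·cos(η/2)·(sin(η/2))^{1−γ} dη
  = (2j/(2−γ))·cos(jβ)·(1/(2π)) ∫₀^{2π} cos(jη)·(sin(η/2))^{2−γ} dη`. -/
theorem integral_sin_shift_cos_half (γ : ℝ) (h1 : 1 < γ) (h2 : γ < 2)
    (j : ℕ) (hj : 1 ≤ j) (β : ℝ) :
    (1 / (2 * Real.pi)) *
        ∫ η in (0 : ℝ)..(2 * Real.pi),
          Real.sin (j * (β - η)) * Real.cos (η / 2) * Real.sin (η / 2) ^ (1 - γ) =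
      (2 * j / (2 - γ)) * Real.cos (j * β) *
        ((1 / (2 * Real.pi)) *
          ∫ η in (0 : ℝ)..(2 * Real.pi),
            Real.cos (j * η) * Real.sin (η / 2) ^ (2 - γ)) :=
  integral_sin_shift_cos_half_general γ h2 j β
end

section
/- Let γ ∈ (1,2), let j ≥ 1 be an integer and let β ∈ ℝ. Then (1/(2π)) ∫₀^{2π} sin(j(β−η)) · sin(η) / (4 sin²(η/2))^{γ/2} dη = [ j · (−1)^j · Γ(3−γ) / ((2−γ) · Γ(2 + j − γ/2) · Γ(2 − j − γ/2)) ] · cos(jβ). -/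
/-!
Substituting `η = 2x` and putting `b = 1 - γ ∈ (-1, 0)` turns the left-hand side into
`(1/π) ∫₀^π sin(jβ - 2jx) (2 sin x)^b cos x dx`. The `sin(jβ) cos(2jx)` part of the
integrand is odd under `x ↦ π - x`, so only `-cos(jβ) sin(2jx) cos x` survives, and
`2 sin(2jx) cos x = sin((2j-1)x) + sin((2j+1)x)`. This reduces everything to the odd sine
moments `T_k = ∫₀^π (2 sin x)^b sin((2k+1)x) dx` (`oddSineMoment b k`). Differentiating `(2 sin x)^(b+1) sin((2k+2)x)`, which
vanishes at `0` and `π`, gives `(b + 2k + 3) T_{k+1} = (2k + 1 - b) T_k`, and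
`T_0 = 2^b ∫₀^π sin^(b+1)` is a Beta integral (substitute `sin² x`). Solving the recursion,
`T_k = (-1)^k π Γ(b+1) / (Γ((b+3)/2 + k) Γ((b+1)/2 - k))`.
-/

open MeasureTheory intervalIntegral Real Set

namespace SinKernel

lemma intervalIntegrable_two_mul_sin_rpow_zero_pi_div_two {b : ℝ} (hb : -1 < b) (hb0 : b < 0) :
    IntervalIntegrable (fun x => (2 * sin x) ^ b) volume 0 (π / 2) := by
  have hπ := pi_pos
  have hdom : IntervalIntegrable (fun x => (4 / π) ^ b * x ^ b) volume 0 (π / 2) :=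
    (intervalIntegrable_rpow' hb).const_mul _
  rw [intervalIntegrable_iff_integrableOn_Ioc_of_le (by positivity)] at hdom ⊢
  refine hdom.mono' ?_ ?_
  · refine ContinuousOn.aestronglyMeasurable ?_ measurableSet_Ioc
    exact (continuous_const.mul continuous_sin).continuousOn.rpow_const fun x hx =>
      Or.inl (mul_pos two_pos (sin_pos_of_pos_of_lt_pi hx.1 (by linarith [hx.2]))).ne'
  · filter_upwards [ae_restrict_mem measurableSet_Ioc] with x ⟨hx0, hxπ⟩
    have hsin : 4 / π * x ≤ 2 * sin x := by
      linarith [mul_le_sin hx0.le hxπ, show 4 / π * x = 2 * (2 / π * x) by ring]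
    rw [norm_of_nonneg (rpow_nonneg ((by positivity : 0 ≤ 4 / π * x).trans hsin) _),
      ← mul_rpow (by positivity) hx0.le]
    exact rpow_le_rpow_of_nonpos (by positivity) hsin hb0.le

lemma intervalIntegrable_two_mul_sin_rpow {b : ℝ} (hb : -1 < b) :
    IntervalIntegrable (fun x => (2 * sin x) ^ b) volume 0 π := by
  rcases le_or_gt 0 b with hb0 | hb0
  · exact ((continuous_const.mul continuous_sin).rpow_const fun _ => Or.inr hb0)
      |>.intervalIntegrable _ _
  have hleft := intervalIntegrable_two_mul_sin_rpow_zero_pi_div_two hb hb0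
  have hright := hleft.comp_sub_left π
  simp only [sin_pi_sub, sub_zero, show π - π / 2 = π / 2 by ring] at hright
  exact hleft.trans hright.symm

noncomputable def oddSineMoment (b : ℝ) (k : ℕ) : ℝ :=
  ∫ x in 0..π, (2 * sin x) ^ b * sin ((2 * k + 1) * x)

lemma intervalIntegrable_two_mul_sin_rpow_mul_sin {b : ℝ} (hb : -1 < b) (c : ℝ) :
    IntervalIntegrable (fun x => (2 * sin x) ^ b * sin (c * x)) volume 0 π :=
  (intervalIntegrable_two_mul_sin_rpow hb).mul_continuousOn (by fun_prop)

lemma hasDerivAt_two_mul_sin_rpow_succ_mul_sin {b x : ℝ} (hx : 0 < sin x) (c : ℝ) :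
    HasDerivAt (fun x => (2 * sin x) ^ (b + 1) * sin (c * x))
      ((2 * sin x) ^ b * ((b + c + 1) * sin ((c + 1) * x) + (b - c + 1) * sin ((c - 1) * x)))
      x := by
  have h2s : 0 < 2 * sin x := by linarith
  have hpow := ((hasDerivAt_sin x).const_mul 2).rpow_const (p := b + 1) (Or.inl h2s.ne')
  refine (hpow.mul (hasDerivAt_const_mul c).sin).congr_deriv ?_
  rw [add_sub_cancel_right, rpow_add h2s, rpow_one, show (c + 1) * x = c * x + x by ring,
    show (c - 1) * x = c * x - x by ring, sin_add, sin_sub]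
  ring

lemma oddSineMoment_succ {b : ℝ} (hb : -1 < b) (k : ℕ) :
    oddSineMoment b (k + 1) = (2 * k + 1 - b) / (b + 2 * k + 3) * oddSineMoment b k := by
  have hb1 : 0 < b + 1 := by linarith
  have hFTC := integral_eq_sub_of_hasDerivAt_of_le pi_pos.le
    (f := fun x => (2 * sin x) ^ (b + 1) * sin ((2 * k + 2) * x))
    (((continuous_const.mul continuous_sin).rpow_const fun _ => Or.inr hb1.le).mul
      (by fun_prop)).continuousOn
    (fun x hx => hasDerivAt_two_mul_sin_rpow_succ_mul_sin (sin_pos_of_pos_of_lt_pi hx.1 hx.2) _)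
    ((intervalIntegrable_two_mul_sin_rpow hb).mul_continuousOn (by fun_prop))
  have hsplit : ∀ x ∈ uIcc 0 π,
      (2 * sin x) ^ b * ((b + (2 * k + 2) + 1) * sin ((2 * k + 2 + 1) * x) +
        (b - (2 * k + 2) + 1) * sin ((2 * k + 2 - 1) * x)) =
      (b + 2 * k + 3) * ((2 * sin x) ^ b * sin ((2 * ((k + 1 : ℕ) : ℝ) + 1) * x)) +
        -(2 * k + 1 - b) * ((2 * sin x) ^ b * sin ((2 * k + 1) * x)) := by
    intro x _
    push_cast
    ring_nf
  rw [integral_congr hsplit,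
    integral_add ((intervalIntegrable_two_mul_sin_rpow_mul_sin hb _).const_mul _)
    ((intervalIntegrable_two_mul_sin_rpow_mul_sin hb _).const_mul _),
    intervalIntegral.integral_const_mul, intervalIntegral.integral_const_mul] at hFTC
  simp only [sin_pi, sin_zero, mul_zero, zero_rpow hb1.ne', zero_mul, sub_zero] at hFTC
  rw [div_mul_eq_mul_div, eq_div_iff (by linarith [k.cast_nonneg (α := ℝ)]), oddSineMoment,
    oddSineMoment]
  linear_combination hFTC

lemma Gamma_mul_Gamma_eq_mul_integral {u v : ℝ} (hu : 0 < u) (hv : 0 < v) :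
    Gamma u * Gamma v = Gamma (u + v) * ∫ x in 0..1, x ^ (u - 1) * (1 - x) ^ (v - 1) := by
  have hbeta := Complex.Gamma_mul_Gamma_eq_betaIntegral (s := u) (t := v) (by simpa) (by simpa)
  have hreal : Complex.betaIntegral u v = ↑(∫ x in 0..1, x ^ (u - 1) * (1 - x) ^ (v - 1)) := by
    rw [Complex.betaIntegral, ← intervalIntegral.integral_ofReal]
    refine integral_congr fun x hx => ?_
    rw [uIcc_of_le zero_le_one] at hx
    push_cast [Complex.ofReal_cpow hx.1, Complex.ofReal_cpow (sub_nonneg.2 hx.2)]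
    rfl
  apply Complex.ofReal_injective
  push_cast [← Complex.Gamma_ofReal]
  rw [hbeta, hreal]

lemma strictMonoOn_sin_sq : StrictMonoOn (fun t => sin t ^ 2) (Icc 0 (π / 2)) :=
  fun x hx y hy hxy => by
    have hπ := pi_pos
    have hsin := strictMonoOn_sin ⟨by linarith [hx.1], hx.2⟩ ⟨by linarith [hy.1], hy.2⟩ hxy
    exact pow_lt_pow_left₀ hsin (sin_nonneg_of_nonneg_of_le_pi hx.1 (by linarith [hx.2]))
      two_ne_zero

lemma integral_rpow_mul_one_sub_rpow_eq_integral_sin_cos (u v : ℝ) :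
    ∫ x in 0..1, x ^ (u - 1) * (1 - x) ^ (v - 1) =
      2 * ∫ t in 0..π / 2, sin t ^ (2 * u - 1) * cos t ^ (2 * v - 1) := by
  have hπ := pi_pos
  have hderiv : ∀ t ∈ Ioo 0 (π / 2),
      HasDerivWithinAt (fun t => sin t ^ 2) (2 * sin t * cos t) (Ioo 0 (π / 2)) t := fun t _ =>
    ((hasDerivAt_sin t).pow 2).hasDerivWithinAt.congr_deriv (by push_cast; ring)
  have hchange := integral_image_eq_integral_abs_deriv_smul measurableSet_Ioo hderiv
    (strictMonoOn_sin_sq.injOn.mono Ioo_subset_Icc_self) (fun x => x ^ (u - 1) * (1 - x) ^ (v - 1))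
  rw [(by fun_prop : Continuous fun t => sin t ^ 2).continuousOn.image_Ioo_of_strictMonoOn
    (by positivity) strictMonoOn_sin_sq] at hchange
  simp only [sin_zero, sin_pi_div_two, one_pow, ne_eq, OfNat.ofNat_ne_zero, not_false_eq_true,
    zero_pow] at hchange
  have hpointwise : ∀ t ∈ Ioo 0 (π / 2),
      |2 * sin t * cos t| • ((sin t ^ 2) ^ (u - 1) * (1 - sin t ^ 2) ^ (v - 1)) =
        2 * (sin t ^ (2 * u - 1) * cos t ^ (2 * v - 1)) := by
    intro t ht
    have hs : 0 < sin t := sin_pos_of_pos_of_lt_pi ht.1 (by linarith [ht.2])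
    have hc : 0 < cos t := cos_pos_of_mem_Ioo ⟨by linarith [ht.1], ht.2⟩
    have hsq {x : ℝ} (hx : 0 < x) (w : ℝ) : (x ^ 2) ^ (w - 1) * x = x ^ (2 * w - 1) := by
      rw [← rpow_natCast, ← rpow_mul hx.le, ← rpow_add_one hx.ne']
      ring_nf
    rw [← cos_sq', smul_eq_mul, abs_of_pos (by positivity), ← hsq hs, ← hsq hc]
    ring
  rw [integral_of_le zero_le_one, integral_Ioc_eq_integral_Ioo, hchange,
    setIntegral_congr_fun measurableSet_Ioo hpointwise, MeasureTheory.integral_const_mul,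
    integral_of_le (by positivity), integral_Ioc_eq_integral_Ioo]

lemma integral_sin_rpow {c : ℝ} (hc : 0 ≤ c) :
    ∫ t in 0..π, sin t ^ c = √π * Gamma ((c + 1) / 2) / Gamma (c / 2 + 1) := by
  have hcont : Continuous fun t => sin t ^ c := continuous_sin.rpow_const fun _ => Or.inr hc
  have hreflect := integral_comp_sub_left (fun t => sin t ^ c) π (a := 0) (b := π / 2)
  simp only [sin_pi_sub, sub_zero, show π - π / 2 = π / 2 by ring] at hreflect
  have hhalf : ∫ t in 0..π, sin t ^ c = 2 * ∫ t in 0..π / 2, sin t ^ c := by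
    rw [← integral_add_adjacent_intervals (hcont.intervalIntegrable 0 (π / 2))
      (hcont.intervalIntegrable _ _), ← hreflect]
    ring
  have hbeta := Gamma_mul_Gamma_eq_mul_integral (u := (c + 1) / 2) (v := 1 / 2) (by positivity)
    (by norm_num)
  rw [integral_rpow_mul_one_sub_rpow_eq_integral_sin_cos] at hbeta
  norm_num only [Gamma_one_half_eq, rpow_zero, mul_one, show 2 * ((c + 1) / 2) - 1 = c by ring,
    show (c + 1) / 2 + 1 / 2 = c / 2 + 1 by ring] at hbeta
  rw [hhalf, eq_div_iff (Gamma_pos_of_pos (by positivity)).ne']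
  linear_combination -hbeta

lemma oddSineMoment_zero {b : ℝ} (hb : -1 < b) :
    oddSineMoment b 0 = π * Gamma (b + 1) / (Gamma ((b + 3) / 2) * Gamma ((b + 1) / 2)) := by
  have hb1 : b + 1 ≠ 0 := by linarith
  have hpointwise : ∀ x ∈ uIcc 0 π,
      (2 * sin x) ^ b * sin ((2 * ((0 : ℕ) : ℝ) + 1) * x) = 2 ^ b * sin x ^ (b + 1) := by
    intro x hx
    rw [uIcc_of_le pi_pos.le] at hx
    have hs := sin_nonneg_of_nonneg_of_le_pi hx.1 hx.2
    rw [Nat.cast_zero, mul_zero, zero_add, one_mul, mul_rpow zero_le_two hs, rpow_add_one' hs hb1]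
    ring
  have hdup := Gamma_mul_Gamma_add_half ((b + 1) / 2)
  rw [show (b + 1) / 2 + 1 / 2 = (b + 1 + 1) / 2 by ring, show 2 * ((b + 1) / 2) = b + 1 by ring,
    show 1 - (b + 1) = -b by ring, rpow_neg zero_le_two] at hdup
  have h2b : (2 : ℝ) ^ b ≠ 0 := by positivity
  field_simp at hdup
  have hΓ : Gamma ((b + 1) / 2) ≠ 0 := (Gamma_pos_of_pos (by linarith)).ne'
  have hΓ' : Gamma ((b + 3) / 2) ≠ 0 := (Gamma_pos_of_pos (by linarith)).ne'
  rw [oddSineMoment, integral_congr hpointwise, intervalIntegral.integral_const_mul,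
    integral_sin_rpow (by linarith), show (b + 1) / 2 + 1 = (b + 3) / 2 by ring]
  field_simp
  linear_combination √π * hdup + Gamma (b + 1) * sq_sqrt pi_pos.le

lemma Gamma_sub_natCast_ne_zero {s : ℝ} (hs₀ : 0 < s) (hs₁ : s < 1) (k : ℕ) :
    Gamma (s - k) ≠ 0 :=
  Gamma_ne_zero fun m h => by
    have hint : (((k : ℤ) - m : ℤ) : ℝ) = s := by push_cast; linarith
    have h₀ : 0 < (k : ℤ) - m := by exact_mod_cast hint ▸ hs₀
    have h₁ : (k : ℤ) - m < 1 := by exact_mod_cast hint ▸ hs₁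
    omega

lemma oddSineMoment_eq {b : ℝ} (hb : -1 < b) (hb' : b < 1) (k : ℕ) :
    oddSineMoment b k =
      (-1) ^ k * π * Gamma (b + 1) / (Gamma ((b + 3) / 2 + k) * Gamma ((b + 1) / 2 - k)) := by
  induction k with
  | zero => simpa using oddSineMoment_zero hb
  | succ k ih =>
    have hk : (0 : ℝ) ≤ k := k.cast_nonneg
    have hA : Gamma ((b + 3) / 2 + ↑(k + 1)) = ((b + 3) / 2 + k) * Gamma ((b + 3) / 2 + k) := by
      rw [Nat.cast_succ, ← add_assoc, Gamma_add_one (by linarith)]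
    have hB : Gamma ((b + 1) / 2 - k) =
        ((b + 1) / 2 - ↑(k + 1)) * Gamma ((b + 1) / 2 - ↑(k + 1)) := by
      rw [← Gamma_add_one (by push_cast; linarith)]
      congr 1
      push_cast
      ring
    have hA₀ : Gamma ((b + 3) / 2 + k) ≠ 0 := (Gamma_pos_of_pos (by linarith)).ne'
    have hB₀ := Gamma_sub_natCast_ne_zero (s := (b + 1) / 2) (by linarith) (by linarith) (k + 1)
    rw [oddSineMoment_succ hb, ih, hA, hB, div_mul_div_comm, div_eq_div_iff]
    · push_cast
      ring
    all_goals push_cast at hB₀ ⊢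
    · exact mul_ne_zero (by linarith) (mul_ne_zero hA₀ (mul_ne_zero (by linarith) hB₀))
    · exact mul_ne_zero (mul_ne_zero (by linarith) hA₀) hB₀

lemma oddSineMoment_add_succ {b : ℝ} (hb : -1 < b) (hb' : b < 1) (k : ℕ) :
    oddSineMoment b k + oddSineMoment b (k + 1) =
      (-1) ^ k * (2 * k + 2) * π * Gamma (b + 1) /
        (Gamma ((b + 5) / 2 + k) * Gamma ((b + 1) / 2 - k)) := by
  have hk : (0 : ℝ) ≤ k := k.cast_nonneg
  have hA : Gamma ((b + 5) / 2 + k) = (b + 2 * k + 3) / 2 * Gamma ((b + 3) / 2 + k) := by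
    rw [show (b + 2 * k + 3) / 2 = (b + 3) / 2 + k by ring, ← Gamma_add_one (by linarith)]
    ring_nf
  have hA₀ : Gamma ((b + 3) / 2 + k) ≠ 0 := (Gamma_pos_of_pos (by linarith)).ne'
  have hB₀ := Gamma_sub_natCast_ne_zero (s := (b + 1) / 2) (by linarith) (by linarith) k
  have : b + 2 * k + 3 ≠ 0 := by linarith
  rw [oddSineMoment_succ hb, oddSineMoment_eq hb hb', hA]
  field_simp
  ring

lemma integral_two_mul_sin_rpow_mul_cos_mul_cos (b : ℝ) (n : ℕ) :
    ∫ x in 0..π, (2 * sin x) ^ b * (cos (2 * n * x) * cos x) = 0 := by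
  have hreflect := integral_comp_sub_left
    (fun x => (2 * sin x) ^ b * (cos (2 * n * x) * cos x)) π (a := 0) (b := π)
  have hodd : ∀ x, (2 * sin (π - x)) ^ b * (cos (2 * n * (π - x)) * cos (π - x)) =
      -((2 * sin x) ^ b * (cos (2 * n * x) * cos x)) := by
    intro x
    rw [sin_pi_sub, cos_pi_sub, show 2 * n * (π - x) = n * (2 * π) - 2 * n * x by ring,
      cos_nat_mul_two_pi_sub]
    ring
  simp only [hodd, intervalIntegral.integral_neg, sub_zero, sub_self] at hreflect
  linarith

lemma integral_two_mul_sin_rpow_mul_sin_mul_cos {b : ℝ} (hb : -1 < b) (k : ℕ) :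
    ∫ x in 0..π, (2 * sin x) ^ b * (sin (2 * (k + 1) * x) * cos x) =
      (oddSineMoment b k + oddSineMoment b (k + 1)) / 2 := by
  have hprod : ∀ x ∈ uIcc 0 π, (2 * sin x) ^ b * (sin (2 * (k + 1) * x) * cos x) =
      1 / 2 * ((2 * sin x) ^ b * sin ((2 * k + 1) * x)) +
        1 / 2 * ((2 * sin x) ^ b * sin ((2 * ((k + 1 : ℕ) : ℝ) + 1) * x)) := by
    intro x _
    rw [Nat.cast_succ, show (2 * k + 1) * x = 2 * (k + 1) * x - x by ring,
      show (2 * (k + 1) + 1) * x = 2 * (k + 1) * x + x by ring, sin_sub, sin_add]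
    ring
  rw [integral_congr hprod,
    integral_add ((intervalIntegrable_two_mul_sin_rpow_mul_sin hb _).const_mul _)
    ((intervalIntegrable_two_mul_sin_rpow_mul_sin hb _).const_mul _),
    intervalIntegral.integral_const_mul, intervalIntegral.integral_const_mul, oddSineMoment,
    oddSineMoment]
  ring

lemma integral_sin_sub_mul_two_mul_sin_rpow_mul_cos {b : ℝ} (hb : -1 < b) (θ : ℝ) (k : ℕ) :
    ∫ x in 0..π, sin (θ - 2 * (k + 1) * x) * ((2 * sin x) ^ b * cos x) =
      -cos θ * (oddSineMoment b k + oddSineMoment b (k + 1)) / 2 := by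
  have hexpand : ∀ x ∈ uIcc 0 π, sin (θ - 2 * (k + 1) * x) * ((2 * sin x) ^ b * cos x) =
      sin θ * ((2 * sin x) ^ b * (cos (2 * ((k + 1 : ℕ) : ℝ) * x) * cos x)) -
        cos θ * ((2 * sin x) ^ b * (sin (2 * (k + 1) * x) * cos x)) := by
    intro x _
    rw [sin_sub]
    push_cast
    ring
  rw [integral_congr hexpand, integral_sub
    (((intervalIntegrable_two_mul_sin_rpow hb).mul_continuousOn (by fun_prop)).const_mul _)
    (((intervalIntegrable_two_mul_sin_rpow hb).mul_continuousOn (by fun_prop)).const_mul _),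
    intervalIntegral.integral_const_mul, intervalIntegral.integral_const_mul,
    integral_two_mul_sin_rpow_mul_cos_mul_cos, integral_two_mul_sin_rpow_mul_sin_mul_cos hb]
  ring

lemma sin_two_mul_div_four_mul_sin_sq_rpow {γ x : ℝ} (hγ : γ ≠ 1) (hx : 0 ≤ sin x) :
    sin (2 * x) / (4 * sin x ^ 2) ^ (γ / 2) = (2 * sin x) ^ (1 - γ) * cos x := by
  have h2s : 0 ≤ 2 * sin x := by linarith
  rw [show 4 * sin x ^ 2 = (2 * sin x) ^ (2 : ℝ) by rw [rpow_two]; ring, ← rpow_mul h2s,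
    rpow_sub' h2s (sub_ne_zero.2 hγ.symm), rpow_one, sin_two_mul]
  ring_nf

end SinKernel

open SinKernel in
/-- For `γ ∈ (1,2)`, an integer `j ≥ 1` and `β ∈ ℝ`,
`(1/(2π)) ∫₀^{2π} sin(j(β−η))·sin(η)/(4 sin²(η/2))^{γ/2} dη
  = [j·(−1)^j·Γ(3−γ)/((2−γ)·Γ(2+j−γ/2)·Γ(2−j−γ/2))]·cos(jβ)`. -/
theorem integral_sin_shift_sin_kernel (γ : ℝ) (h1 : 1 < γ) (h2 : γ < 2)
    (j : ℕ) (hj : 1 ≤ j) (β : ℝ) :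
    (1 / (2 * Real.pi)) *
        ∫ η in (0 : ℝ)..(2 * Real.pi),
          Real.sin (j * (β - η)) * Real.sin η /
            (4 * Real.sin (η / 2) ^ 2) ^ (γ / 2) =
      (j * (-1 : ℝ) ^ j * Real.Gamma (3 - γ) /
          ((2 - γ) * Real.Gamma (2 + j - γ / 2) * Real.Gamma (2 - j - γ / 2))) *
        Real.cos (j * β) := by
  obtain ⟨k, rfl⟩ : ∃ k, j = k + 1 := ⟨j - 1, by omega⟩
  set F : ℝ → ℝ := fun x =>
    sin ((k + 1) * β - 2 * (k + 1) * x) * ((2 * sin x) ^ (1 - γ) * cos x)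
  have hintegrand : ∀ η ∈ uIcc 0 (2 * π),
      sin (↑(k + 1) * (β - η)) * sin η / (4 * sin (η / 2) ^ 2) ^ (γ / 2) = F (η / 2) := by
    intro η hη
    rw [uIcc_of_le (by positivity)] at hη
    have hsin : 0 ≤ sin (η / 2) :=
      sin_nonneg_of_nonneg_of_le_pi (by linarith [hη.1]) (by linarith [hη.2])
    have hkernel := sin_two_mul_div_four_mul_sin_sq_rpow (γ := γ) (by linarith) hsin
    rw [show 2 * (η / 2) = η by ring] at hkernel
    rw [mul_div_assoc, hkernel]
    simp only [F]
    push_cast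
    ring_nf
  have hΓ : Gamma (3 - γ) = (2 - γ) * Gamma (1 - γ + 1) := by
    rw [show 2 - γ = 1 - γ + 1 by ring, ← Gamma_add_one (by linarith)]
    ring_nf
  rw [integral_congr hintegrand, integral_comp_div F two_ne_zero, zero_div,
    mul_div_cancel_left₀ _ two_ne_zero, smul_eq_mul,
    integral_sin_sub_mul_two_mul_sin_rpow_mul_cos (by linarith),
    oddSineMoment_add_succ (by linarith) (by linarith), hΓ]
  push_cast
  rw [show (1 - γ + 5) / 2 + k = 2 + (k + 1) - γ / 2 by ring,
    show (1 - γ + 1) / 2 - k = 2 - (k + 1) - γ / 2 by ring]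
  have : 2 - γ ≠ 0 := by linarith
  field_simp
  ring
end

section
/- Let γ ∈ (1,2) and for an integer j ≥ 2 let σ_j = 2^{γ−1} · (Γ(1−γ)/Γ(1−γ/2)²) · ( Γ(1+γ/2)/Γ(2−γ/2) − Γ(j+γ/2)/Γ(1+j−γ/2) ). Then σ_j > 0 for every integer j ≥ 2, and σ_j < σ_{j+1} for every integer j ≥ 2. -/
/-!
Write `a = γ/2 ∈ (1/2, 1)` and `g n = Γ(n + a) / Γ(n + (1 - a))`, so that
`σ_j = C · (g 1 - g j)` with `C = 2^{γ-1} Γ(1-γ) / Γ(1-γ/2)² < 0`, since `1 - γ ∈ (-1, 0)`.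
By `Γ(s + 1) = s Γ(s)`, `g (n + 1) = (n + a) / (n + 1 - a) · g n`, and the factor exceeds `1`
because `a > 1 - a`; hence `g` is positive and strictly increasing, and so is `σ`.
-/

namespace Real

theorem Gamma_neg_of_neg_one_lt_of_neg {s : ℝ} (hs₁ : -1 < s) (hs₀ : s < 0) : Gamma s < 0 := by
  have hrec : Gamma (s + 1) = s * Gamma s := Gamma_add_one hs₀.ne
  have hpos : 0 < Gamma (s + 1) := Gamma_pos_of_pos (by linarith)
  nlinarith

theorem Gamma_div_Gamma_pos {a b : ℝ} (ha : 0 < a) (hb : 0 < b) (n : ℕ) :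
    0 < Gamma (n + a) / Gamma (n + b) :=
  div_pos (Gamma_pos_of_pos (by positivity)) (Gamma_pos_of_pos (by positivity))

theorem Gamma_div_Gamma_succ {a b : ℝ} (ha : 0 < a) (hb : 0 < b) (n : ℕ) :
    Gamma ((n + 1 : ℕ) + a) / Gamma ((n + 1 : ℕ) + b) =
      (n + a) / (n + b) * (Gamma (n + a) / Gamma (n + b)) := by
  have hxa : (n : ℝ) + a ≠ 0 := by positivity
  have hxb : (n : ℝ) + b ≠ 0 := by positivity
  rw [Nat.cast_succ, add_right_comm, add_right_comm _ 1 b, Gamma_add_one hxa, Gamma_add_one hxb,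
    mul_div_mul_comm]

theorem strictMono_Gamma_div_Gamma {a b : ℝ} (hb : 0 < b) (hba : b < a) :
    StrictMono fun n : ℕ => Gamma (n + a) / Gamma (n + b) := by
  refine strictMono_nat_of_lt_succ fun n => ?_
  have hfactor : 1 < (n + a) / (n + b) := (one_lt_div (by positivity)).mpr (by linarith)
  rw [Gamma_div_Gamma_succ (hb.trans hba) hb]
  exact lt_mul_left (Gamma_div_Gamma_pos (hb.trans hba) hb n) hfactor

end Real

/-- Positivity and strict monotonicity of the eigenvalues
`σ_j = 2^{γ−1}·(Γ(1−γ)/Γ(1−γ/2)²)·(Γ(1+γ/2)/Γ(2−γ/2) − Γ(j+γ/2)/Γ(1+j−γ/2))`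
of the linearized contour-dynamics operator, for `γ ∈ (1,2)` and integers `j ≥ 2`. -/
theorem sigma_pos_and_strictMono (γ : ℝ) (h1 : 1 < γ) (h2 : γ < 2)
    (σ : ℕ → ℝ)
    (hσ : ∀ j : ℕ, 2 ≤ j →
      σ j = 2 ^ (γ - 1) * (Real.Gamma (1 - γ) / Real.Gamma (1 - γ / 2) ^ 2) *
        (Real.Gamma (1 + γ / 2) / Real.Gamma (2 - γ / 2) -
          Real.Gamma (j + γ / 2) / Real.Gamma (1 + j - γ / 2))) :
    (∀ j : ℕ, 2 ≤ j → 0 < σ j) ∧ (∀ j : ℕ, 2 ≤ j → σ j < σ (j + 1)) := by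
  set C := 2 ^ (γ - 1) * (Real.Gamma (1 - γ) / Real.Gamma (1 - γ / 2) ^ 2)
  set g : ℕ → ℝ := fun n => Real.Gamma (n + γ / 2) / Real.Gamma (n + (1 - γ / 2))
  have hC : C < 0 :=
    mul_neg_of_pos_of_neg (Real.rpow_pos_of_pos two_pos _) <|
      div_neg_of_neg_of_pos (Real.Gamma_neg_of_neg_one_lt_of_neg (by linarith) (by linarith))
        (pow_pos (Real.Gamma_pos_of_pos (by linarith)) 2)
  have hg : StrictMono g := Real.strictMono_Gamma_div_Gamma (by linarith) (by linarith)
  have hσg : ∀ j, 2 ≤ j → σ j = C * (g 1 - g j) := by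
    intro j hj
    rw [hσ j hj]
    norm_num [g, add_sub_assoc', add_comm (1 : ℝ), show (1 : ℝ) + 1 = 2 by norm_num]
  refine ⟨fun j hj => ?_, fun j hj => ?_⟩
  · rw [hσg j hj]
    exact mul_pos_of_neg_of_neg hC (sub_neg.mpr (hg (by omega)))
  · rw [hσg j hj, hσg (j + 1) (by omega)]
    exact mul_lt_mul_of_neg_left (sub_lt_sub_left (hg j.lt_succ_self) _) hC
end

section
/- Let γ ∈ (1,2) and for an integer j ≥ 2 let σ_j = 2^{γ−1} · (Γ(1−γ)/Γ(1−γ/2)²) · ( Γ(1+γ/2)/Γ(2−γ/2) − Γ(j+γ/2)/Γ(1+j−γ/2) ). Then there exist constants 0 < c ≤ C such that c·j^{γ−1} ≤ σ_j ≤ C·j^{γ−1} for every integer j ≥ 2. -/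
/-!
Writing `a = γ/2` and `R(x) = Γ(x + a) / Γ(1 + x - a)`, one has `σ_j = K (R(j) - R(1))` with
`K = -2^{γ-1} Γ(1-γ) / Γ(1-γ/2)² > 0`, because `Γ < 0` on `(-1, 0)`. Log-convexity of `Γ` gives
Gautschi's inequalities, which squeeze `R(x)` between `(x + a - 1)^{2a-1}` and `(1 + x - a)^{2a-1}`.
Since `R(j+1) / R(j) = (j + a) / (1 + j - a) > 1`, the sequence `R(j)` increases strictly, so
`R(j) - R(1) ≥ (1 - R(1)/R(2)) R(j)` for `j ≥ 2`.
-/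

open Real

namespace Real

theorem Gamma_neg_of_mem_Ioo {s : ℝ} (hs : s ∈ Set.Ioo (-1) 0) : Gamma s < 0 := by
  have hpos : 0 < Gamma (s + 1) := Gamma_pos_of_pos (by linarith [hs.1])
  rw [Gamma_add_one hs.2.ne] at hpos
  exact neg_of_mul_pos_right hpos hs.2.le

theorem rpow_one_sub_mul_Gamma_add_le_Gamma_add_one {x s : ℝ} (hx : 0 < x) (hs0 : 0 < s)
    (hs1 : s < 1) : x ^ (1 - s) * Gamma (x + s) ≤ Gamma (x + 1) := by
  have hconv := Gamma_mul_add_mul_le_rpow_Gamma_mul_rpow_Gamma hx (by linarith : 0 < x + 1)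
    (sub_pos.2 hs1) hs0 (sub_add_cancel 1 s)
  have hΓ : 0 < Gamma (x + 1) := Gamma_pos_of_pos (by linarith)
  have hΓx : Gamma x = Gamma (x + 1) / x := by
    rw [Gamma_add_one hx.ne']; field_simp
  rw [show (1 - s) * x + s * (x + 1) = x + s by ring, hΓx, div_rpow hΓ.le hx.le,
    div_mul_eq_mul_div, ← rpow_add hΓ, sub_add_cancel, rpow_one] at hconv
  rwa [le_div_iff₀' (rpow_pos_of_pos hx _)] at hconv

theorem Gamma_add_one_le_rpow_one_sub_mul_Gamma_add {x s : ℝ} (hx : 0 < x) (hs0 : 0 < s)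
    (hs1 : s < 1) : Gamma (x + 1) ≤ (x + s) ^ (1 - s) * Gamma (x + s) := by
  have hxs : 0 < x + s := by linarith
  have hconv := Gamma_mul_add_mul_le_rpow_Gamma_mul_rpow_Gamma hxs (by linarith : 0 < x + s + 1)
    hs0 (sub_pos.2 hs1) (add_sub_cancel s 1)
  have hΓ : 0 < Gamma (x + s) := Gamma_pos_of_pos hxs
  rwa [show s * (x + s) + (1 - s) * (x + s + 1) = x + 1 by ring, Gamma_add_one hxs.ne',
    mul_rpow hxs.le hΓ.le, mul_left_comm, ← rpow_add hΓ, add_sub_cancel, rpow_one] at hconv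

end Real

noncomputable def gammaRatio (a x : ℝ) : ℝ := Gamma (x + a) / Gamma (1 + x - a)

section gammaRatio

variable {a x : ℝ}

theorem gammaRatio_pos (ha0 : 0 < a) (ha1 : a < 1) (hx : 0 ≤ x) : 0 < gammaRatio a x :=
  div_pos (Gamma_pos_of_pos (by linarith)) (Gamma_pos_of_pos (by linarith))

theorem gammaRatio_add_one (hxa : x + a ≠ 0) (hxa' : 1 + x - a ≠ 0) :
    gammaRatio a (x + 1) = (x + a) / (1 + x - a) * gammaRatio a x := by
  rw [gammaRatio, gammaRatio, add_right_comm, Gamma_add_one hxa,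
    show 1 + (x + 1) - a = 1 + x - a + 1 by ring, Gamma_add_one hxa', mul_div_mul_comm]

theorem gammaRatio_lt_gammaRatio_add_one (ha0 : 1 / 2 < a) (ha1 : a < 1) (hx : 0 ≤ x) :
    gammaRatio a x < gammaRatio a (x + 1) := by
  have hden : 0 < 1 + x - a := by linarith
  rw [gammaRatio_add_one (by linarith) hden.ne']
  exact lt_mul_left (gammaRatio_pos (by linarith) ha1 hx)
    ((one_lt_div hden).2 (by linarith))

theorem strictMono_gammaRatio_natCast (ha0 : 1 / 2 < a) (ha1 : a < 1) :
    StrictMono fun n : ℕ => gammaRatio a n :=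
  strictMono_nat_of_lt_succ fun n => by
    simpa using gammaRatio_lt_gammaRatio_add_one ha0 ha1 n.cast_nonneg

theorem rpow_le_gammaRatio (ha0 : 1 / 2 < a) (ha1 : a < 1) (hx : 1 - a < x) :
    (x + a - 1) ^ (2 * a - 1) ≤ gammaRatio a x := by
  have h := rpow_one_sub_mul_Gamma_add_le_Gamma_add_one (by linarith : 0 < x + a - 1)
    (by linarith : 0 < 2 - 2 * a) (by linarith)
  rw [show x + a - 1 + (2 - 2 * a) = 1 + x - a by ring, sub_add_cancel,
    show 1 - (2 - 2 * a) = 2 * a - 1 by ring] at h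
  rwa [gammaRatio, le_div_iff₀ (Gamma_pos_of_pos (by linarith))]

theorem gammaRatio_le_rpow (ha0 : 1 / 2 < a) (ha1 : a < 1) (hx : 1 - a < x) :
    gammaRatio a x ≤ (1 + x - a) ^ (2 * a - 1) := by
  have h := Gamma_add_one_le_rpow_one_sub_mul_Gamma_add (by linarith : 0 < x + a - 1)
    (by linarith : 0 < 2 - 2 * a) (by linarith)
  rw [show x + a - 1 + (2 - 2 * a) = 1 + x - a by ring, sub_add_cancel,
    show 1 - (2 - 2 * a) = 2 * a - 1 by ring] at h
  rwa [gammaRatio, div_le_iff₀ (Gamma_pos_of_pos (by linarith))]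

theorem exists_bounds_gammaRatio_sub_gammaRatio_one (ha0 : 1 / 2 < a) (ha1 : a < 1) :
    ∃ c C : ℝ, 0 < c ∧ ∀ j : ℕ, 2 ≤ j →
      c * (j : ℝ) ^ (2 * a - 1) ≤ gammaRatio a j - gammaRatio a 1 ∧
        gammaRatio a j - gammaRatio a 1 ≤ C * (j : ℝ) ^ (2 * a - 1) := by
  set p := 2 * a - 1
  have hp : 0 ≤ p := by linarith
  have hmono := strictMono_gammaRatio_natCast ha0 ha1
  have hR1 : 0 < gammaRatio a 1 := gammaRatio_pos (by linarith) ha1 zero_le_one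
  have hR2 : 0 < gammaRatio a 2 := gammaRatio_pos (by linarith) ha1 zero_le_two
  have hR12 : gammaRatio a 1 < gammaRatio a 2 := by simpa using hmono one_lt_two
  set u := 1 - gammaRatio a 1 / gammaRatio a 2
  have hu : 0 < u := sub_pos.2 ((div_lt_one hR2).2 hR12)
  refine ⟨u / 2 ^ p, 2 ^ p, by positivity, fun j hj => ⟨?_, ?_⟩⟩
  · have hR1j : gammaRatio a 1 ≤ gammaRatio a 1 / gammaRatio a 2 * gammaRatio a j := by
      have hR2j : gammaRatio a 2 ≤ gammaRatio a j := by simpa using hmono.monotone hj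
      rw [div_mul_eq_mul_div, le_div_iff₀ hR2]
      gcongr
    have hj : (2 : ℝ) ≤ j := by exact_mod_cast hj
    calc u / 2 ^ p * (j : ℝ) ^ p = u * (j / 2 : ℝ) ^ p := by
          rw [div_rpow (by linarith) zero_le_two]; ring
      _ ≤ u * (j + a - 1) ^ p := by gcongr; linarith
      _ ≤ u * gammaRatio a j := by gcongr; exact rpow_le_gammaRatio ha0 ha1 (by linarith)
      _ = gammaRatio a j - gammaRatio a 1 / gammaRatio a 2 * gammaRatio a j := by ring
      _ ≤ gammaRatio a j - gammaRatio a 1 := by linarith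
  · have hj : (1 : ℝ) ≤ j := by exact_mod_cast (one_le_two.trans hj)
    calc gammaRatio a j - gammaRatio a 1 ≤ gammaRatio a j := by linarith
      _ ≤ (1 + j - a) ^ p := gammaRatio_le_rpow ha0 ha1 (by linarith)
      _ ≤ (2 * j : ℝ) ^ p := by gcongr <;> linarith
      _ = 2 ^ p * (j : ℝ) ^ p := mul_rpow zero_le_two (by linarith)

end gammaRatio

/-- Two-sided bound `σ_j ≍ j^{γ−1}` for the eigenvalues
`σ_j = 2^{γ−1}·(Γ(1−γ)/Γ(1−γ/2)²)·(Γ(1+γ/2)/Γ(2−γ/2) − Γ(j+γ/2)/Γ(1+j−γ/2))`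
of the linearized contour-dynamics operator, for `γ ∈ (1,2)`. -/
theorem sigma_growth (γ : ℝ) (h1 : 1 < γ) (h2 : γ < 2)
    (σ : ℕ → ℝ)
    (hσ : ∀ j : ℕ, 2 ≤ j →
      σ j = 2 ^ (γ - 1) * (Real.Gamma (1 - γ) / Real.Gamma (1 - γ / 2) ^ 2) *
        (Real.Gamma (1 + γ / 2) / Real.Gamma (2 - γ / 2) -
          Real.Gamma (j + γ / 2) / Real.Gamma (1 + j - γ / 2))) :
    ∃ c C : ℝ, 0 < c ∧ c ≤ C ∧
      ∀ j : ℕ, 2 ≤ j →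
        c * (j : ℝ) ^ (γ - 1) ≤ σ j ∧ σ j ≤ C * (j : ℝ) ^ (γ - 1) := by
  obtain ⟨c, C, hc, hbounds⟩ :=
    exists_bounds_gammaRatio_sub_gammaRatio_one (a := γ / 2) (by linarith) (by linarith)
  rw [show 2 * (γ / 2) - 1 = γ - 1 by ring] at hbounds
  set K := -(2 ^ (γ - 1) * (Gamma (1 - γ) / Gamma (1 - γ / 2) ^ 2))
  have hK : 0 < K := neg_pos.2 <| mul_neg_of_pos_of_neg (by positivity) <|
    div_neg_of_neg_of_pos (Gamma_neg_of_mem_Ioo ⟨by linarith, by linarith⟩)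
      (pow_pos (Gamma_pos_of_pos (by linarith)) 2)
  have hσK : ∀ j : ℕ, 2 ≤ j → σ j = K * (gammaRatio (γ / 2) j - gammaRatio (γ / 2) 1) := by
    intro j hj
    rw [hσ j hj, gammaRatio, gammaRatio, show (1 : ℝ) + 1 - γ / 2 = 2 - γ / 2 by ring]
    ring
  refine ⟨K * c, K * C, by positivity, ?_, fun j hj => ?_⟩
  · obtain ⟨hlow, hhigh⟩ := hbounds 2 le_rfl
    exact mul_le_mul_of_nonneg_left (le_of_mul_le_mul_right (hlow.trans hhigh) (by positivity))
      hK.le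
  · rw [hσK j hj, mul_assoc, mul_assoc]
    exact ⟨mul_le_mul_of_nonneg_left (hbounds j hj).1 hK.le,
      mul_le_mul_of_nonneg_left (hbounds j hj).2 hK.le⟩
end

section
/- Let γ ∈ (1,2), M > 0, and let g : ℝ → ℝ be twice continuously differentiable and 2π-periodic with |g(β)| ≤ M, |g'(β)| ≤ M and |g''(β)| ≤ M for all β. For ε > 0, x ∈ ℝ², set R(β) = 1 + ε^{1+γ}·g(β) and z(β) = (z₁(β), z₂(β)) = x + ε·R(β)·(cos β, sin β). Then for every β: z₁'(β)·z₂''(β) − z₂'(β)·z₁''(β) = ε²·( R(β)² + 2·ε^{2+2γ}·g'(β)² − ε^{1+γ}·g''(β)·R(β) ), and there exists ε₀ > 0, depending only on γ and M, such that for every ε ∈ (0, ε₀) this quantity is strictly positive for all β; consequently the curve z has strictly positive signed curvature (z₁'z₂'' − z₂'z₁'')/((z₁')² + (z₂')²)^{3/2} for all β. -/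
/-!
The boundary is the polar curve `β ↦ x + ρ(β)(cos β, sin β)` with radius `ρ = ε R`, and for
any polar curve `z₁'z₂'' − z₂'z₁'' = ρ² + 2ρ'² − ρρ''`. With `a = ε^{1+γ}` this is
`ε²(R(R − a g'') + 2a²g'²)`, and both `R = 1 + a g` and `R − a g''` are at least `1 − 2aM > 0`
once `2aM < 1`, which holds for `ε < min 1 (1/(2M))` because `ε^{1+γ} ≤ ε` there.
A positive numerator forces `(z₁', z₂') ≠ 0`, so the curvature is positive as well.
-/

open Real

/-- First coordinate of the patch boundary parameterization
`z(β) = x + ε(1 + ε^{1+γ} g(β))(cos β, sin β)`. -/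
noncomputable def patchZ1 (γ ε : ℝ) (g : ℝ → ℝ) (x : ℝ × ℝ) (β : ℝ) : ℝ :=
  x.1 + ε * (1 + ε ^ (1 + γ) * g β) * Real.cos β

/-- Second coordinate of the patch boundary parameterization
`z(β) = x + ε(1 + ε^{1+γ} g(β))(cos β, sin β)`. -/
noncomputable def patchZ2 (γ ε : ℝ) (g : ℝ → ℝ) (x : ℝ × ℝ) (β : ℝ) : ℝ :=
  x.2 + ε * (1 + ε ^ (1 + γ) * g β) * Real.sin β

/-- Numerator `z₁'·z₂'' − z₂'·z₁''` of the signed curvature of the curve `z`. -/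
noncomputable def curvNum (γ ε : ℝ) (g : ℝ → ℝ) (x : ℝ × ℝ) (β : ℝ) : ℝ :=
  deriv (patchZ1 γ ε g x) β * deriv (deriv (patchZ2 γ ε g x)) β -
    deriv (patchZ2 γ ε g x) β * deriv (deriv (patchZ1 γ ε g x)) β

section PolarCurve

variable {ρ : ℝ → ℝ}

theorem deriv_polar_cos (c : ℝ) (hρ : Differentiable ℝ ρ) :
    deriv (fun t => c + ρ t * cos t) = fun t => deriv ρ t * cos t - ρ t * sin t := by
  funext t
  exact (((hρ t).hasDerivAt.mul (hasDerivAt_cos t)).const_add c).deriv.trans (by ring)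

theorem deriv_polar_sin (c : ℝ) (hρ : Differentiable ℝ ρ) :
    deriv (fun t => c + ρ t * sin t) = fun t => deriv ρ t * sin t + ρ t * cos t := by
  funext t
  exact (((hρ t).hasDerivAt.mul (hasDerivAt_sin t)).const_add c).deriv

theorem deriv_deriv_polar_cos (c : ℝ) (hρ : Differentiable ℝ ρ)
    (hρ' : Differentiable ℝ (deriv ρ)) (t : ℝ) :
    deriv (deriv (fun t => c + ρ t * cos t)) t =
      deriv (deriv ρ) t * cos t - 2 * deriv ρ t * sin t - ρ t * cos t := by
  rw [deriv_polar_cos c hρ]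
  exact (((hρ' t).hasDerivAt.mul (hasDerivAt_cos t)).sub
    ((hρ t).hasDerivAt.mul (hasDerivAt_sin t))).deriv.trans (by ring)

theorem deriv_deriv_polar_sin (c : ℝ) (hρ : Differentiable ℝ ρ)
    (hρ' : Differentiable ℝ (deriv ρ)) (t : ℝ) :
    deriv (deriv (fun t => c + ρ t * sin t)) t =
      deriv (deriv ρ) t * sin t + 2 * deriv ρ t * cos t - ρ t * sin t := by
  rw [deriv_polar_sin c hρ]
  exact (((hρ' t).hasDerivAt.mul (hasDerivAt_sin t)).add
    ((hρ t).hasDerivAt.mul (hasDerivAt_cos t))).deriv.trans (by ring)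

theorem polar_curvature_numerator_eq (c₁ c₂ : ℝ) (hρ : Differentiable ℝ ρ)
    (hρ' : Differentiable ℝ (deriv ρ)) (t : ℝ) :
    deriv (fun t => c₁ + ρ t * cos t) t * deriv (deriv (fun t => c₂ + ρ t * sin t)) t -
        deriv (fun t => c₂ + ρ t * sin t) t * deriv (deriv (fun t => c₁ + ρ t * cos t)) t =
      ρ t ^ 2 + 2 * deriv ρ t ^ 2 - ρ t * deriv (deriv ρ) t := by
  rw [deriv_deriv_polar_cos c₁ hρ hρ', deriv_deriv_polar_sin c₂ hρ hρ', deriv_polar_cos c₁ hρ,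
    deriv_polar_sin c₂ hρ]
  linear_combination (ρ t ^ 2 + 2 * deriv ρ t ^ 2 - ρ t * deriv (deriv ρ) t) * sin_sq_add_cos_sq t

end PolarCurve

theorem curvature_pos_of_numerator_pos {u v u' v' : ℝ} (h : 0 < u * v' - v * u') :
    0 < (u * v' - v * u') / (u ^ 2 + v ^ 2) ^ ((3 : ℝ) / 2) := by
  have hspeed : 0 < u ^ 2 + v ^ 2 := by
    rcases (add_nonneg (sq_nonneg u) (sq_nonneg v)).lt_or_eq with hpos | hzero
    · exact hpos
    · obtain ⟨rfl, rfl⟩ : u = 0 ∧ v = 0 := by constructor <;> nlinarith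
      simp at h
  exact div_pos h (rpow_pos_of_pos hspeed _)

theorem curvature_quadratic_pos {a M G G' G'' : ℝ} (ha : 0 ≤ a) (hG : |G| ≤ M)
    (hG'' : |G''| ≤ M) (haM : 2 * (a * M) < 1) :
    0 < (1 + a * G) ^ 2 + 2 * a ^ 2 * G' ^ 2 - a * G'' * (1 + a * G) := by
  obtain ⟨hG_lower, -⟩ := abs_le.mp hG
  obtain ⟨-, hG''_upper⟩ := abs_le.mp hG''
  have hR : 0 < 1 + a * G := by nlinarith
  have hR' : 0 < 1 + a * G - a * G'' := by nlinarith
  nlinarith [mul_pos hR hR', sq_nonneg (a * G')]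

theorem curvNum_eq {g : ℝ → ℝ} (hg : ContDiff ℝ 2 g) (γ ε : ℝ) (x : ℝ × ℝ) (β : ℝ) :
    curvNum γ ε g x β =
      ε ^ 2 * ((1 + ε ^ (1 + γ) * g β) ^ 2 + 2 * (ε ^ (1 + γ)) ^ 2 * deriv g β ^ 2 -
        ε ^ (1 + γ) * deriv (deriv g) β * (1 + ε ^ (1 + γ) * g β)) := by
  have hρ : Differentiable ℝ fun t => ε * (1 + ε ^ (1 + γ) * g t) := by
    have := hg.differentiable two_ne_zero
    fun_prop
  have hρ' : deriv (fun t => ε * (1 + ε ^ (1 + γ) * g t)) =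
      fun t => ε * (ε ^ (1 + γ) * deriv g t) := by
    simp only [deriv_const_mul_field', deriv_const_add']
  have hρ'_diff : Differentiable ℝ (deriv fun t => ε * (1 + ε ^ (1 + γ) * g t)) := by
    have := hg.differentiable_deriv_two
    rw [hρ']
    fun_prop
  calc curvNum γ ε g x β = _ := polar_curvature_numerator_eq x.1 x.2 hρ hρ'_diff β
    _ = _ := by
      rw [hρ', deriv_const_mul_field', deriv_const_mul_field']
      ring

theorem patch_convexity_general (γ M : ℝ) (h1 : 1 < γ) (hM : 0 < M) :
    (∀ g : ℝ → ℝ, ContDiff ℝ 2 g → (∀ β : ℝ, g (β + 2 * Real.pi) = g β) →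
      (∀ β : ℝ, |g β| ≤ M) → (∀ β : ℝ, |deriv g β| ≤ M) →
      (∀ β : ℝ, |deriv (deriv g) β| ≤ M) →
      ∀ ε : ℝ, 0 < ε → ∀ x : ℝ × ℝ, ∀ β : ℝ,
        curvNum γ ε g x β =
          ε ^ 2 * ((1 + ε ^ (1 + γ) * g β) ^ 2 +
            2 * ε ^ (2 + 2 * γ) * deriv g β ^ 2 -
            ε ^ (1 + γ) * deriv (deriv g) β * (1 + ε ^ (1 + γ) * g β))) ∧
    ∃ ε₀ > (0 : ℝ), ∀ g : ℝ → ℝ, ContDiff ℝ 2 g →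
      (∀ β : ℝ, g (β + 2 * Real.pi) = g β) →
      (∀ β : ℝ, |g β| ≤ M) → (∀ β : ℝ, |deriv g β| ≤ M) →
      (∀ β : ℝ, |deriv (deriv g) β| ≤ M) →
      ∀ ε : ℝ, ε ∈ Set.Ioo 0 ε₀ → ∀ x : ℝ × ℝ, ∀ β : ℝ,
        0 < curvNum γ ε g x β ∧
        0 < curvNum γ ε g x β /
            ((deriv (patchZ1 γ ε g x) β ^ 2 +
              deriv (patchZ2 γ ε g x) β ^ 2) ^ ((3 : ℝ) / 2)) := by
  refine ⟨fun g hg _ _ _ _ ε hε x β => ?_, min 1 (1 / (2 * M)), by positivity, ?_⟩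
  · have hsq : (ε ^ (1 + γ)) ^ 2 = ε ^ (2 + 2 * γ) := by
      rw [← rpow_natCast, ← rpow_mul hε.le]
      ring_nf
    rw [curvNum_eq hg, hsq]
  · intro g hg _ hgM _ hgM'' ε ⟨hε, hεlt⟩ x β
    have hsmall : 2 * (ε ^ (1 + γ) * M) < 1 := by
      have hε1 : ε ≤ 1 := (hεlt.trans_le (min_le_left _ _)).le
      have hεM : ε * (2 * M) < 1 :=
        (lt_div_iff₀ (by positivity)).mp (hεlt.trans_le (min_le_right _ _))
      have hpow : ε ^ (1 + γ) ≤ ε := by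
        simpa using rpow_le_rpow_of_exponent_ge hε hε1 (by linarith : (1 : ℝ) ≤ 1 + γ)
      nlinarith
    have hnum : 0 < curvNum γ ε g x β := by
      rw [curvNum_eq hg]
      exact mul_pos (pow_pos hε 2)
        (curvature_quadratic_pos (rpow_nonneg hε.le _) (hgM β) (hgM'' β) hsmall)
    exact ⟨hnum, curvature_pos_of_numerator_pos hnum⟩

/-- Convexity of the vortex patches: for a `C²`, `2π`-periodic perturbation `g`
bounded (with its first two derivatives) by `M`, the curvature numerator of the
patch boundary `z(β) = x + ε(1 + ε^{1+γ} g(β))(cos β, sin β)` equals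
`ε²(R² + 2ε^{2+2γ}(g')² − ε^{1+γ} g'' R)` with `R = 1 + ε^{1+γ} g`, and there
is `ε₀ > 0` depending only on `γ` and `M` such that for all `ε ∈ (0, ε₀)` this
quantity, and hence the signed curvature, is strictly positive. -/
theorem patch_convexity (γ M : ℝ) (h1 : 1 < γ) (h2 : γ < 2) (hM : 0 < M) :
    (∀ g : ℝ → ℝ, ContDiff ℝ 2 g → (∀ β : ℝ, g (β + 2 * Real.pi) = g β) →
      (∀ β : ℝ, |g β| ≤ M) → (∀ β : ℝ, |deriv g β| ≤ M) →
      (∀ β : ℝ, |deriv (deriv g) β| ≤ M) →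
      ∀ ε : ℝ, 0 < ε → ∀ x : ℝ × ℝ, ∀ β : ℝ,
        curvNum γ ε g x β =
          ε ^ 2 * ((1 + ε ^ (1 + γ) * g β) ^ 2 +
            2 * ε ^ (2 + 2 * γ) * deriv g β ^ 2 -
            ε ^ (1 + γ) * deriv (deriv g) β * (1 + ε ^ (1 + γ) * g β))) ∧
    ∃ ε₀ > (0 : ℝ), ∀ g : ℝ → ℝ, ContDiff ℝ 2 g →
      (∀ β : ℝ, g (β + 2 * Real.pi) = g β) →
      (∀ β : ℝ, |g β| ≤ M) → (∀ β : ℝ, |deriv g β| ≤ M) →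
      (∀ β : ℝ, |deriv (deriv g) β| ≤ M) →
      ∀ ε : ℝ, ε ∈ Set.Ioo 0 ε₀ → ∀ x : ℝ × ℝ, ∀ β : ℝ,
        0 < curvNum γ ε g x β ∧
        0 < curvNum γ ε g x β /
            ((deriv (patchZ1 γ ε g x) β ^ 2 +
              deriv (patchZ2 γ ε g x) β ^ 2) ^ ((3 : ℝ) / 2)) :=
  patch_convexity_general γ M h1 hM
end
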